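/- Let f: ℝⁿ → ℝ be the function f(x) = Σ_{t=1}^{n-1} γ α_t |x_{t+1} - x_t| with γ ≥ 0 and α_t ≥ 0. Then its Fenchel conjugate f*(u) equals 0 if |Σ_{i=t+1}^{n} u_i| ≤ γ α_t for all t ∈ {0,...,n-1} (with α_0 = 0), and equals +∞ otherwise. -/
import Mathlib

open Finset

private lemma fin_tele {n : ℕ} (z : Fin (n + 1) → ℝ) (i : Fin (n + 1)) :
    z i = z 0 + ∑ t ∈ univ.filter (fun t : Fin n => t.succ ≤ i),
      (z t.succ - z t.castSucc) := by
  induction i using Fin.induction with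
  | zero =>
    have h : univ.filter (fun t : Fin n => t.succ ≤ (0 : Fin (n + 1))) = ∅ := by
      ext t
      simp [Fin.le_def]
    rw [h]
    simp
  | succ t0 ih =>
    have hset : univ.filter (fun t : Fin n => t.succ ≤ t0.succ)
        = insert t0 (univ.filter (fun t : Fin n => t.succ ≤ t0.castSucc)) := by
      ext t
      simp only [mem_filter, mem_univ, true_and, mem_insert, Fin.le_def, Fin.val_succ,
        Fin.coe_castSucc]
      constructor
      · intro h
        rcases eq_or_ne t t0 with h' | h'
        · exact Or.inl h'
        · right
          have hv : t.val ≠ t0.val := fun hv => h' (Fin.ext hv)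
          omega
      · rintro (h | h)
        · subst h; omega
        · omega
    have hmem : t0 ∉ univ.filter (fun t : Fin n => t.succ ≤ t0.castSucc) := by
      simp [Fin.le_def]
    rw [hset, Finset.sum_insert hmem]
    linarith [ih]

private lemma fin_abel {n : ℕ} (z u : Fin (n + 1) → ℝ) :
    ∑ i, z i * u i = z 0 * ∑ i, u i +
      ∑ t : Fin n, (z t.succ - z t.castSucc) * ∑ i ∈ Finset.Ici t.succ, u i := by
  have h1 : ∑ i, z i * u i = ∑ i, (z 0 + ∑ t ∈ univ.filter (fun t : Fin n => t.succ ≤ i),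
      (z t.succ - z t.castSucc)) * u i := by
    refine Finset.sum_congr rfl fun i _ => ?_
    rw [← fin_tele z i]
  rw [h1]
  simp only [add_mul, Finset.sum_add_distrib, ← Finset.mul_sum, Finset.sum_mul]
  congr 1
  have h2 : ∀ i : Fin (n + 1), ∑ t ∈ univ.filter (fun t : Fin n => t.succ ≤ i),
      (z t.succ - z t.castSucc) * u i
      = ∑ t : Fin n, if t.succ ≤ i then (z t.succ - z t.castSucc) * u i else 0 := by
    intro i
    rw [Finset.sum_filter]
  rw [Finset.sum_congr rfl fun i _ => h2 i, Finset.sum_comm]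
  refine Finset.sum_congr rfl fun t _ => ?_
  have h3 : (Finset.Ici t.succ : Finset (Fin (n + 1)))
      = univ.filter (fun i => t.succ ≤ i) := by
    ext i
    simp [Finset.mem_Ici]
  rw [h3, Finset.sum_filter, Finset.mul_sum]
  refine Finset.sum_congr rfl fun i _ => ?_
  split <;> simp [mul_comm]

open Classical in
/-- The Fenchel conjugate of the weighted total-variation penalty
`f(x) = γ Σ_t α_t |x_{t+1} − x_t|` on `ℝ^{n+1}` equals `0` when all tail sums of `u`
satisfy `|Σ_{i ≥ t+1} u_i| ≤ γ α_t` and the total sum of `u` vanishes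
(the `t = 0` condition with `α_0 = 0`), and equals `+∞` otherwise. -/
theorem fenchel_conjugate_weighted_tv (n : ℕ) (γ : ℝ) (hγ : 0 ≤ γ)
    (α : Fin n → ℝ) (hα : ∀ t, 0 ≤ α t) (u : Fin (n + 1) → ℝ) :
    (⨆ z : Fin (n + 1) → ℝ,
        (((∑ i, z i * u i) - γ * ∑ t : Fin n, α t * |z t.succ - z t.castSucc| : ℝ) : EReal)) =
      if (∑ i, u i) = 0 ∧ ∀ t : Fin n, |∑ i ∈ Finset.Ici t.succ, u i| ≤ γ * α t then
        (0 : EReal) else ⊤ := by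
  by_cases hC : (∑ i, u i) = 0 ∧ ∀ t : Fin n, |∑ i ∈ Finset.Ici t.succ, u i| ≤ γ * α t
  · rw [if_pos hC]
    obtain ⟨hs, hb⟩ := hC
    apply le_antisymm
    · apply iSup_le
      intro z
      have hle : (∑ i, z i * u i) - γ * ∑ t : Fin n, α t * |z t.succ - z t.castSucc| ≤ 0 := by
        rw [fin_abel z u, hs, mul_zero, zero_add]
        have hterm : ∀ t : Fin n, (z t.succ - z t.castSucc) * (∑ i ∈ Finset.Ici t.succ, u i)
            ≤ γ * (α t * |z t.succ - z t.castSucc|) := by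
          intro t
          calc (z t.succ - z t.castSucc) * (∑ i ∈ Finset.Ici t.succ, u i)
              ≤ |z t.succ - z t.castSucc| * |∑ i ∈ Finset.Ici t.succ, u i| := by
                rw [← abs_mul]; exact le_abs_self _
            _ ≤ |z t.succ - z t.castSucc| * (γ * α t) :=
                mul_le_mul_of_nonneg_left (hb t) (abs_nonneg _)
            _ = γ * (α t * |z t.succ - z t.castSucc|) := by ring
        have h2 : ∑ t : Fin n, (z t.succ - z t.castSucc) * (∑ i ∈ Finset.Ici t.succ, u i)
            ≤ ∑ t : Fin n, γ * (α t * |z t.succ - z t.castSucc|) :=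
          Finset.sum_le_sum fun t _ => hterm t
        rw [← Finset.mul_sum] at h2
        linarith
      exact_mod_cast hle
    · refine le_iSup_of_le (0 : Fin (n + 1) → ℝ) ?_
      simp
  · rw [if_neg hC]
    have key : ∀ M : ℝ, ∃ z : Fin (n + 1) → ℝ,
        M ≤ (∑ i, z i * u i) - γ * ∑ t : Fin n, α t * |z t.succ - z t.castSucc| := by
      intro M
      rcases not_and_or.mp hC with hs | hbnot
      · refine ⟨fun _ => M / ∑ i, u i, ?_⟩
        have h1 : ∑ i, (M / ∑ i, u i) * u i = M := by
          rw [← Finset.mul_sum]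
          field_simp
        simp [h1]
      · push_neg at hbnot
        obtain ⟨t0, ht0⟩ := hbnot
        set T : ℝ := ∑ i ∈ Finset.Ici t0.succ, u i with hTdef
        set ε : ℝ := |T| - γ * α t0 with hεdef
        have hε : 0 < ε := by simp only [hεdef]; linarith
        set K : ℝ := max (M / ε) 0 with hKdef
        have hK0 : 0 ≤ K := le_max_right _ _
        have hKM : M ≤ K * ε := by
          have : (M / ε) * ε ≤ K * ε :=
            mul_le_mul_of_nonneg_right (le_max_left _ _) hε.le
          rwa [div_mul_cancel₀ _ hε.ne'] at this
        set c : ℝ := if 0 ≤ T then K else -K with hcdef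
        refine ⟨fun i => if t0.succ ≤ i then c else 0, ?_⟩
        have hsum : ∑ i, (if t0.succ ≤ i then c else 0) * u i = c * T := by
          rw [hTdef, Finset.mul_sum]
          have h3 : (Finset.Ici t0.succ : Finset (Fin (n + 1)))
              = univ.filter (fun i => t0.succ ≤ i) := by
            ext i; simp [Finset.mem_Ici]
          rw [h3, Finset.sum_filter]
          refine Finset.sum_congr rfl fun i _ => ?_
          split <;> simp
        have hpen : ∑ t : Fin n, α t *
            |(if t0.succ ≤ t.succ then c else 0) - (if t0.succ ≤ t.castSucc then c else 0)|
            = α t0 * K := by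
          rw [Finset.sum_eq_single t0]
          · have h1 : t0.succ ≤ t0.succ := le_refl _
            have h2 : ¬ t0.succ ≤ t0.castSucc := by
              simp [Fin.le_def]
            rw [if_pos h1, if_neg h2, sub_zero]
            have : |c| = K := by
              rw [hcdef]; split
              · exact abs_of_nonneg hK0
              · rw [abs_neg]; exact abs_of_nonneg hK0
            rw [this]
          · intro t _ hne
            have hv : t.val ≠ t0.val := fun hv => hne (Fin.ext hv)
            have : (if t0.succ ≤ t.succ then c else 0)
                = (if t0.succ ≤ t.castSucc then c else 0) := by
              simp only [Fin.le_def, Fin.val_succ, Fin.coe_castSucc]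
              have : (t0.val + 1 ≤ t.val + 1) ↔ (t0.val + 1 ≤ t.val) := by omega
              simp [this]
            rw [this, sub_self, abs_zero, mul_zero]
          · intro h
            exact absurd (Finset.mem_univ t0) h
        have hcT : c * T = K * |T| := by
          rw [hcdef]; split
          · rw [abs_of_nonneg (by assumption), mul_comm]
          · rw [abs_of_neg (by linarith [not_le.mp (by assumption : ¬ 0 ≤ T)])]
            ring
        have hgoal : (∑ i, (if t0.succ ≤ i then c else 0) * u i) -
            γ * ∑ t : Fin n, α t *
              |(if t0.succ ≤ t.succ then c else 0) - (if t0.succ ≤ t.castSucc then c else 0)|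
            = K * ε := by
          rw [hsum, hpen, hcT, hεdef]; ring
        calc M ≤ K * ε := hKM
          _ = _ := hgoal.symm
    rw [iSup_eq_top]
    intro b hb
    obtain ⟨x, hbx, -⟩ := EReal.lt_iff_exists_real_btwn.mp hb
    obtain ⟨z, hz⟩ := key x
    exact ⟨z, lt_of_lt_of_le hbx (EReal.coe_le_coe_iff.mpr hz)⟩
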